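/- Let γ ∈ (0, 2) and let χ : ℝ → ℝ be a positive C^2 function. Let q_1 ∈ ℝ satisfy χ'(q_1) = 0, and consider the planar vector field f(σ_1, σ_2) = (−√(2/3)σ_2, (1/2)(1 − σ_2^2)((2−γ)σ_2 − ((4−3γ)/√6)·χ'(σ_1)/χ(σ_1))). Then (q_1, 0) is an equilibrium of f, the Jacobian matrix of f at (q_1, 0) equals [[0, −√(2/3)], [−((4−3γ)/(2√6))·χ''(q_1)/χ(q_1), (2−γ)/2]], its characteristic polynomial is λ^2 − 2Δ_1 λ − Δ_2·χ''(q_1)/χ(q_1) with Δ_1 = (2−γ)/4 and Δ_2 = (4−3γ)/6 (so its eigenvalues are Δ_1 ± √(Δ_1^2 + Δ_2·χ''(q_1)/χ(q_1))), and at least one eigenvalue has positive real part. -/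

import Mathlib

/-! At a critical point `q₁` of `χ` the derivative of `χ'/χ` is just `χ''/χ`, since the
`χ'²` term of the quotient rule vanishes; everything else in the Jacobian is read off a
polynomial. The trace of the Jacobian is `2Δ₁ = (2 - γ)/2 > 0`, and the two complex
eigenvalues `Δ₁ ± w` have real parts summing to `2Δ₁`, so one of them has positive real
part. -/

theorem HasDerivAt.div_of_eq_zero {g h : ℝ → ℝ} {g' h' x : ℝ} (hg : HasDerivAt g g' x)
    (hh : HasDerivAt h h' x) (hgx : g x = 0) (hhx : h x ≠ 0) :
    HasDerivAt (fun y => g y / h y) (g' / h x) x :=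
  (hg.div hh hhx).congr_deriv (by rw [hgx]; field_simp; ring)

theorem Matrix.det_smul_one_sub_fin_two {R : Type*} [CommRing R] (lam a b c d : R) :
    (lam • (1 : Matrix (Fin 2) (Fin 2) R) - !![a, b; c, d]).det
      = lam ^ 2 - (a + d) * lam + (a * d - b * c) := by
  have : lam • (1 : Matrix (Fin 2) (Fin 2) R) - !![a, b; c, d]
      = !![lam - a, -b; -c, lam - d] := by
    ext i j; fin_cases i <;> fin_cases j <;> simp
  rw [this, Matrix.det_fin_two_of]
  ring

theorem Complex.exists_sq_sub_two_mul_sub_eq_zero_and_re_pos {a : ℝ} (ha : 0 < a) (K : ℂ) :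
    ∃ z : ℂ, z ^ 2 - 2 * a * z - K = 0 ∧ 0 < z.re := by
  obtain ⟨w, hw⟩ := IsAlgClosed.exists_eq_mul_self ((a : ℂ) ^ 2 + K)
  rcases le_total 0 w.re with hre | hre
  · exact ⟨a + w, by linear_combination -hw, by simp; linarith⟩
  · exact ⟨a - w, by linear_combination -hw, by simp; linarith⟩

theorem Real.sqrt_two_div_three : √(2 / 3) = √6 / 3 := by
  rw [show (2 / 3 : ℝ) = 6 / 3 ^ 2 by norm_num, Real.sqrt_div' _ (by positivity),
    Real.sqrt_sq zero_le_three]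

theorem stmt_10_general
    (γ : ℝ) (hγ2 : γ < 2)
    (χ χ' χ'' : ℝ → ℝ)
    (hχd : ∀ x, HasDerivAt χ (χ' x) x)
    (hχd' : ∀ x, HasDerivAt χ' (χ'' x) x)
    (hχpos : ∀ x, 0 < χ x)
    (q1 : ℝ) (hq1 : χ' q1 = 0)
    (f : ℝ × ℝ → ℝ × ℝ)
    (hf : ∀ p : ℝ × ℝ, f p =
      (-(Real.sqrt (2/3)) * p.2,
        (1/2) * (1 - p.2^2) *
          ((2 - γ) * p.2 - ((4 - 3*γ) / Real.sqrt 6) * (χ' p.1 / χ p.1)))) :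
    -- `(q₁, 0)` is an equilibrium
    f (q1, 0) = (0, 0)
    -- the Jacobian matrix of `f` at `(q₁, 0)`
    ∧ deriv (fun s => (f (s, 0)).1) q1 = 0
    ∧ deriv (fun s => (f (q1, s)).1) 0 = -(Real.sqrt (2/3))
    ∧ deriv (fun s => (f (s, 0)).2) q1
        = -((4 - 3*γ) / (2 * Real.sqrt 6)) * (χ'' q1 / χ q1)
    ∧ deriv (fun s => (f (q1, s)).2) 0 = (2 - γ) / 2
    -- the characteristic polynomial of that matrix
    ∧ (∀ lam : ℝ,
        (lam • (1 : Matrix (Fin 2) (Fin 2) ℝ)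
          - !![0, -(Real.sqrt (2/3));
              -((4 - 3*γ) / (2 * Real.sqrt 6)) * (χ'' q1 / χ q1), (2 - γ) / 2]).det
        = lam^2 - 2 * ((2 - γ)/4) * lam - ((4 - 3*γ)/6) * (χ'' q1 / χ q1))
    -- the eigenvalues are `Δ₁ ± √(Δ₁² + Δ₂ χ''(q₁)/χ(q₁))`
    ∧ (∀ lam : ℝ,
        lam^2 - 2 * ((2 - γ)/4) * lam - ((4 - 3*γ)/6) * (χ'' q1 / χ q1) = 0 ↔
        (lam - (2 - γ)/4)^2 = ((2 - γ)/4)^2 + ((4 - 3*γ)/6) * (χ'' q1 / χ q1))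
    -- at least one eigenvalue has positive real part
    ∧ (∃ lam : ℂ,
        lam^2 - 2 * (((2 - γ)/4 : ℝ) : ℂ) * lam
          - ((((4 - 3*γ)/6) * (χ'' q1 / χ q1) : ℝ) : ℂ) = 0 ∧ 0 < lam.re) := by
  have f_horizontal : ∀ s, f (s, 0) = (0, -((4 - 3*γ) / (2 * √6)) * (χ' s / χ s)) := by
    intro s; rw [hf]; ext <;> simp; ring
  have f_vertical : ∀ s, f (q1, s) = (-√(2/3) * s, (1/2) * (1 - s^2) * ((2 - γ) * s)) := by
    intro s; rw [hf]; simp [hq1]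
  have χ'_div_χ_deriv : HasDerivAt (fun s => χ' s / χ s) (χ'' q1 / χ q1) q1 :=
    (hχd' q1).div_of_eq_zero (hχd q1) hq1 (hχpos q1).ne'
  have cubic_deriv :
      HasDerivAt (fun s : ℝ => (1/2) * (1 - s^2) * ((2 - γ) * s)) ((2 - γ) / 2) 0 :=
    ((((hasDerivAt_pow 2 0).const_sub 1).const_mul (1/2)).mul
      ((hasDerivAt_id' 0).const_mul (2 - γ))).congr_deriv (by norm_num; ring)
  refine ⟨by simp [f_horizontal, hq1], by simp [f_horizontal], by simp [f_vertical], ?_,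
    by simpa [f_vertical] using cubic_deriv.deriv, fun lam => ?_,
    fun lam => ⟨fun h => by linear_combination h, fun h => by linear_combination h⟩, ?_⟩
  · simpa [f_horizontal] using (χ'_div_χ_deriv.const_mul _).deriv
  · rw [Matrix.det_smul_one_sub_fin_two, Real.sqrt_two_div_three]
    field_simp
    ring
  · exact Complex.exists_sq_sub_two_mul_sub_eq_zero_and_re_pos (by linarith) _

/-- At a stationary point `q₁` of the coupling function `χ`, the point `(q₁, 0)` is an
equilibrium of the planar vector field `f`; the Jacobian matrix of `f` there is
`[[0, −√(2/3)], [−((4−3γ)/(2√6))·χ''(q₁)/χ(q₁), (2−γ)/2]]`, with characteristic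
polynomial `λ² − 2Δ₁λ − Δ₂·χ''(q₁)/χ(q₁)` (`Δ₁ = (2−γ)/4`, `Δ₂ = (4−3γ)/6`), so that the
eigenvalues are `Δ₁ ± √(Δ₁² + Δ₂·χ''(q₁)/χ(q₁))`, and at least one eigenvalue has
positive real part. -/
theorem stmt_10
    (γ : ℝ) (hγ0 : 0 < γ) (hγ2 : γ < 2)
    (χ χ' χ'' : ℝ → ℝ)
    (hχd : ∀ x, HasDerivAt χ (χ' x) x)
    (hχd' : ∀ x, HasDerivAt χ' (χ'' x) x)
    (hχpos : ∀ x, 0 < χ x)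
    (q1 : ℝ) (hq1 : χ' q1 = 0)
    (f : ℝ × ℝ → ℝ × ℝ)
    (hf : ∀ p : ℝ × ℝ, f p =
      (-(Real.sqrt (2/3)) * p.2,
        (1/2) * (1 - p.2^2) *
          ((2 - γ) * p.2 - ((4 - 3*γ) / Real.sqrt 6) * (χ' p.1 / χ p.1)))) :
    -- `(q₁, 0)` is an equilibrium
    f (q1, 0) = (0, 0)
    -- the Jacobian matrix of `f` at `(q₁, 0)`
    ∧ deriv (fun s => (f (s, 0)).1) q1 = 0
    ∧ deriv (fun s => (f (q1, s)).1) 0 = -(Real.sqrt (2/3))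
    ∧ deriv (fun s => (f (s, 0)).2) q1
        = -((4 - 3*γ) / (2 * Real.sqrt 6)) * (χ'' q1 / χ q1)
    ∧ deriv (fun s => (f (q1, s)).2) 0 = (2 - γ) / 2
    -- the characteristic polynomial of that matrix
    ∧ (∀ lam : ℝ,
        (lam • (1 : Matrix (Fin 2) (Fin 2) ℝ)
          - !![0, -(Real.sqrt (2/3));
              -((4 - 3*γ) / (2 * Real.sqrt 6)) * (χ'' q1 / χ q1), (2 - γ) / 2]).det
        = lam^2 - 2 * ((2 - γ)/4) * lam - ((4 - 3*γ)/6) * (χ'' q1 / χ q1))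
    -- the eigenvalues are `Δ₁ ± √(Δ₁² + Δ₂ χ''(q₁)/χ(q₁))`
    ∧ (∀ lam : ℝ,
        lam^2 - 2 * ((2 - γ)/4) * lam - ((4 - 3*γ)/6) * (χ'' q1 / χ q1) = 0 ↔
        (lam - (2 - γ)/4)^2 = ((2 - γ)/4)^2 + ((4 - 3*γ)/6) * (χ'' q1 / χ q1))
    -- at least one eigenvalue has positive real part
    ∧ (∃ lam : ℂ,
        lam^2 - 2 * (((2 - γ)/4 : ℝ) : ℂ) * lam
          - ((((4 - 3*γ)/6) * (χ'' q1 / χ q1) : ℝ) : ℂ) = 0 ∧ 0 < lam.re) :=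
  stmt_10_general γ hγ2 χ χ' χ'' hχd hχd' hχpos q1 hq1 f hf
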